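/- Let (X, δ_X) and (Y, δ_Y) be Polish diversities (separable and complete induced metric spaces), both having the extension property. Then (X, δ_X) and (Y, δ_Y) are isomorphic: there is a bijection φ : X → Y with δ_Y(φ(A)) = δ_X(A) for all finite A ⊆ X. -/

import Mathlib

open scoped Classical

/-- A diversity on `X`: a real-valued function on finite subsets satisfying
(D1) nonnegativity with `δ A = 0 ↔ |A| ≤ 1`, and (D2) the triangle inequality. -/
structure Diversity (X : Type*) where
  δ : Finset X → ℝ
  nonneg : ∀ A : Finset X, 0 ≤ δ A
  eq_zero_iff : ∀ A : Finset X, δ A = 0 ↔ A.card ≤ 1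
  triangle : ∀ A B C : Finset X, B.Nonempty → δ (A ∪ C) ≤ δ (A ∪ B) + δ (B ∪ C)

/-- An admissible function on a diversity (a one-point extension). -/
structure IsAdmissible {X : Type*} (D : Diversity X) (f : Finset X → ℝ) : Prop where
  empty : f ∅ = 0
  le : ∀ A : Finset X, D.δ A ≤ f A
  tri : ∀ A B C : Finset X, C.Nonempty → f (A ∪ B) ≤ f (A ∪ C) + D.δ (B ∪ C)
  subadd : ∀ A B : Finset X, f (A ∪ B) ≤ f A + f B

/-- Restriction of a diversity to a subset. -/
noncomputable def Diversity.restrict {X : Type*} (D : Diversity X) (S : Set X) : Diversity S where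
  δ A := D.δ (A.image Subtype.val)
  nonneg A := D.nonneg _
  eq_zero_iff A := by
    rw [D.eq_zero_iff, Finset.card_image_of_injective _ Subtype.val_injective]
  triangle A B C hB := by
    have h := D.triangle (A.image Subtype.val) (B.image Subtype.val) (C.image Subtype.val)
      (hB.image _)
    simpa [Finset.image_union] using h

/-- Separability of the induced metric `d a b = δ {a, b}`. -/
def Diversity.SeparableD {X : Type*} (D : Diversity X) : Prop :=
  ∃ s : Set X, s.Countable ∧ ∀ x : X, ∀ ε : ℝ, 0 < ε → ∃ y ∈ s, D.δ {x, y} < ε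

/-- Completeness of the induced metric `d a b = δ {a, b}`. -/
def Diversity.CompleteD {X : Type*} (D : Diversity X) : Prop :=
  ∀ u : ℕ → X, (∀ ε : ℝ, 0 < ε → ∃ N : ℕ, ∀ m ≥ N, ∀ n ≥ N, D.δ {u m, u n} < ε) →
    ∃ x : X, ∀ ε : ℝ, 0 < ε → ∃ N : ℕ, ∀ n ≥ N, D.δ {u n, x} < ε

/-- The diversity `δ̂` on (finite sets of) admissible functions. -/
noncomputable def hatδ {X : Type*} (F : Finset (Finset X → ℝ)) : ℝ :=
  if F.card ≤ 1 then 0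
  else sSup { r : ℝ | ∃ j ∈ F, ∃ A : (Finset X → ℝ) → Finset X,
    r = j ((F.erase j).biUnion A) - ∑ i ∈ F.erase j, i (A i) }

/-- The canonical maximal extension `f_S^X` of an admissible function on `S ⊆ X`. -/
noncomputable def extFun {X : Type*} (D : Diversity X) (S : Set X) (f : Finset S → ℝ)
    (A : Finset X) : ℝ :=
  sInf { r : ℝ | ∃ (B : Finset S) (As : S → Finset X),
    B.biUnion As = A ∧ r = f B + ∑ b ∈ B, D.δ (insert (b : X) (As b)) }

/-- An admissible function is finitely supported if it is the canonical extension
of an admissible function on some finite nonempty `S ⊆ X`. -/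
def FinitelySupported {X : Type*} (D : Diversity X) (f : Finset X → ℝ) : Prop :=
  ∃ S : Set X, S.Finite ∧ S.Nonempty ∧ ∃ g : Finset S → ℝ,
    IsAdmissible (D.restrict S) g ∧ f = extFun D S g

/-- The extension property for a diversity. -/
def Diversity.ExtensionProp {X : Type*} (D : Diversity X) : Prop :=
  ∀ F : Finset X, ∀ f : Finset ((F : Set X)) → ℝ,
    IsAdmissible (D.restrict (F : Set X)) f →
    ∃ x : X, ∀ A : Finset ((F : Set X)), D.δ (insert x (A.image Subtype.val)) = f A

/-- The approximate extension property for a diversity. -/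
def Diversity.ApproxExtensionProp {X : Type*} (D : Diversity X) : Prop :=
  ∀ F : Finset X, ∀ f : Finset ((F : Set X)) → ℝ,
    IsAdmissible (D.restrict (F : Set X)) f →
    ∀ ε : ℝ, 0 < ε →
      ∃ x : X, ∀ A : Finset ((F : Set X)), |D.δ (insert x (A.image Subtype.val)) - f A| ≤ ε

/-- Ultrahomogeneity: isomorphisms between finite subsets extend to automorphisms. -/
def Diversity.Ultrahomogeneous {X : Type*} (D : Diversity X) : Prop :=
  ∀ (A A' : Finset X) (φ : ((A : Set X)) → ((A' : Set X))), Function.Bijective φ →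
    (∀ B : Finset ((A : Set X)),
      D.δ (B.image (fun b => (φ b : X))) = D.δ (B.image Subtype.val)) →
    ∃ Φ : X → X, Function.Bijective Φ ∧ (∀ C : Finset X, D.δ (C.image Φ) = D.δ C) ∧
      ∀ a : ((A : Set X)), Φ a = (φ a : X)

/-!
Back and forth. By the extension property of `Y`, a finite partial isomorphism from `X` to `Y`
can be extended to any further point of `X`, and symmetrically; running this along countable
dense subsets of `X` and `Y` gives a partial isomorphism `R` whose domain and range are dense.
Completeness then extends `R` to maps `φ : X → Y` and `ψ : Y → X` that are no farther from a
pair of `R` than their argument is. Since `δ` is `1`-Lipschitz in each point, `φ` preserves `δ`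
on all finite sets, and `ψ` is a right inverse of `φ`.
-/

open Finset

lemma eq_of_forall_abs_sub_le_mul {u v c : ℝ} (h : ∀ ε > 0, |u - v| ≤ c * ε) : u = v := by
  refine eq_of_forall_dist_le fun η hη => ?_
  have hc : 0 < |c| + 1 := by positivity
  calc dist u v = |u - v| := Real.dist_eq u v
    _ ≤ c * (η / (|c| + 1)) := h _ (by positivity)
    _ ≤ |c| * (η / (|c| + 1)) := by gcongr; exact le_abs_self c
    _ ≤ η := by
      rw [mul_div_assoc', div_le_iff₀ hc]
      nlinarith

namespace Diversity

variable {X Y Z ι : Type*}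

section Basic

variable (D : Diversity X)

lemma δ_empty : D.δ ∅ = 0 := (D.eq_zero_iff ∅).2 (by simp)

lemma δ_singleton (x : X) : D.δ {x} = 0 := (D.eq_zero_iff {x}).2 (by simp)

lemma δ_pair_eq_zero_iff {x y : X} : D.δ {x, y} = 0 ↔ x = y := by
  rw [D.eq_zero_iff]
  constructor
  · intro h
    by_contra hne
    rw [card_pair hne] at h
    omega
  · rintro rfl
    simp

lemma δ_pair_triangle (x y z : X) : D.δ {x, z} ≤ D.δ {x, y} + D.δ {y, z} := by
  simpa only [← insert_eq] using D.triangle {x} {y} {z} (singleton_nonempty y)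

lemma δ_le_δ_insert (x : X) (A : Finset X) : D.δ A ≤ D.δ (insert x A) := by
  simpa [δ_singleton, ← insert_eq, union_comm A] using
    D.triangle A {x} ∅ (singleton_nonempty x)

lemma δ_insert_le (x x' : X) (A : Finset X) :
    D.δ (insert x A) ≤ D.δ (insert x' A) + D.δ {x, x'} := by
  simpa only [union_comm A, ← insert_eq, pair_comm x'] using
    D.triangle A {x'} {x} (singleton_nonempty x')

lemma abs_δ_insert_sub_le (x x' : X) (A : Finset X) :
    |D.δ (insert x A) - D.δ (insert x' A)| ≤ D.δ {x, x'} := by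
  have hsymm : D.δ {x', x} = D.δ {x, x'} := by rw [pair_comm]
  rw [abs_sub_le_iff]
  constructor <;> linarith [D.δ_insert_le x x' A, D.δ_insert_le x' x A]

lemma abs_δ_image_sub_le (f g : Z → X) {A : Finset Z} {ε : ℝ}
    (h : ∀ z ∈ A, D.δ {f z, g z} ≤ ε) :
    |D.δ (A.image f) - D.δ (A.image g)| ≤ A.card * ε := by
  suffices H : ∀ C : Finset X,
      |D.δ (C ∪ A.image f) - D.δ (C ∪ A.image g)| ≤ A.card * ε by
    simpa using H ∅
  induction A using Finset.induction_on with
  | empty => simp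
  | insert z A hz ih =>
    intro C
    have hA := ih (fun w hw => h w (mem_insert_of_mem hw)) (insert (g z) C)
    have hz' := (D.abs_δ_insert_sub_le (f z) (g z) (C ∪ A.image f)).trans
      (h z (mem_insert_self z A))
    simp only [image_insert, union_insert, insert_union, card_insert_of_notMem hz] at hA hz' ⊢
    calc |D.δ (insert (f z) (C ∪ A.image f)) - D.δ (insert (g z) (C ∪ A.image g))|
        ≤ |D.δ (insert (f z) (C ∪ A.image f)) - D.δ (insert (g z) (C ∪ A.image f))|
          + |D.δ (insert (g z) (C ∪ A.image f)) - D.δ (insert (g z) (C ∪ A.image g))| :=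
          abs_sub_le _ _ _
      _ ≤ ε + A.card * ε := add_le_add hz' hA
      _ = (A.card + 1 : ℕ) * ε := by push_cast; ring

lemma isAdmissible_δ_insert (x : X) : IsAdmissible D (fun A => D.δ (insert x A)) where
  empty := by simpa using D.δ_singleton x
  le A := D.δ_le_δ_insert x A
  tri A B C hC := by
    simpa only [insert_union, union_comm C] using D.triangle (insert x A) C B hC
  subadd A B := by
    have h := D.triangle (insert x A) {x} (insert x B) (singleton_nonempty x)
    have e₁ : insert x A ∪ {x} = insert x A := by simp
    have e₂ : {x} ∪ insert x B = insert x B := by simp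
    have e₃ : insert x A ∪ insert x B = insert x (A ∪ B) := by
      rw [insert_union, union_insert, insert_idem]
    rwa [e₁, e₂, e₃] at h

end Basic

lemma _root_.IsAdmissible.comp_image {D : Diversity X} {E : Diversity Z} {f : Finset X → ℝ}
    (hf : IsAdmissible D f) (σ : Z → X) (hσ : ∀ B, D.δ (B.image σ) = E.δ B) :
    IsAdmissible E (fun B => f (B.image σ)) where
  empty := by simpa using hf.empty
  le B := hσ B ▸ hf.le _
  tri A B C hC := by
    have h := hf.tri (A.image σ) (B.image σ) (C.image σ) (hC.image σ)
    rwa [← image_union, ← image_union, ← image_union, hσ] at h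
  subadd A B := by simpa only [image_union] using hf.subadd (A.image σ) (B.image σ)

section PartialIso

variable (DX : Diversity X) (DY : Diversity Y)

def IsPartialIso (R : Set (X × Y)) : Prop :=
  ∀ A : Finset (X × Y), ↑A ⊆ R → DY.δ (A.image Prod.snd) = DX.δ (A.image Prod.fst)

variable {DX DY}

lemma isPartialIso_empty : IsPartialIso DX DY ∅ := by
  intro A hA
  rw [Set.subset_empty_iff, coe_eq_empty] at hA
  simp [hA, δ_empty]

lemma isPartialIso_iUnion {κ : Type*} [Nonempty κ] {R : κ → Set (X × Y)}
    (hdir : Directed (· ⊆ ·) R) (hR : ∀ k, IsPartialIso DX DY (R k)) :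
    IsPartialIso DX DY (⋃ k, R k) := by
  intro A hA
  obtain ⟨k, hk⟩ := hdir.exists_mem_subset_of_finset_subset_biUnion hA
  exact hR k A hk

namespace IsPartialIso

variable {R : Set (X × Y)} (hR : IsPartialIso DX DY R)
include hR

lemma δ_image_eq (A : Finset R) :
    DY.δ (A.image fun p => p.1.2) = DX.δ (A.image fun p => p.1.1) := by
  have h := hR (A.image Subtype.val) (by simp)
  rwa [image_image, image_image] at h

lemma δ_pair {p q : X × Y} (hp : p ∈ R) (hq : q ∈ R) :
    DY.δ {p.2, q.2} = DX.δ {p.1, q.1} := by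
  simpa using hR {p, q} (by simp [Set.insert_subset_iff, hp, hq])

lemma fst_eq_of_snd_eq {p q : X × Y} (hp : p ∈ R) (hq : q ∈ R) (h : p.2 = q.2) :
    p.1 = q.1 := by
  rw [← DX.δ_pair_eq_zero_iff, ← hR.δ_pair hp hq, h, DY.δ_pair_eq_zero_iff]

end IsPartialIso

namespace IsPartialIso

variable {S : Finset (X × Y)} (hS : IsPartialIso DX DY ↑S)
include hS

lemma image_swap : IsPartialIso DY DX ↑(S.image Prod.swap) := by
  intro A hA
  have hA' : ↑(A.image Prod.swap) ⊆ (S : Set (X × Y)) := by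
    rw [coe_subset] at hA ⊢
    simpa [image_image, Prod.swap_swap_eq] using image_subset_image (f := Prod.swap) hA
  have h := (hS _ hA').symm
  rwa [image_image, image_image] at h

lemma exists_δ_insert_eq (hYe : DY.ExtensionProp) (x : X) :
    ∃ y, ∀ A ⊆ S,
      DY.δ (insert y (A.image Prod.snd)) = DX.δ (insert x (A.image Prod.fst)) := by
  set F := S.image Prod.snd
  have hF : ∀ z : (F : Set Y), ∃ p ∈ S, p.2 = z := fun z => mem_image.1 z.2
  choose pick hpickS hpick using hF
  -- `z ↦ (pick z).1` embeds the subdiversity `F` of `Y` into `X`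
  have hσ : ∀ B, DX.δ (B.image fun z => (pick z).1) = (DY.restrict F).δ B := by
    intro B
    have h := hS (B.image pick) (coe_subset.2 fun p hp => by
      obtain ⟨z, -, rfl⟩ := mem_image.1 hp
      exact hpickS z)
    rw [image_image, image_image] at h
    rw [← Function.comp_def Prod.fst pick, ← h]
    exact congrArg DY.δ (image_congr fun z _ => hpick z)
  obtain ⟨y, hy⟩ := hYe F _ ((DX.isAdmissible_δ_insert x).comp_image _ hσ)
  refine ⟨y, fun A hA => ?_⟩
  have hmem : ∀ p ∈ A, p.2 ∈ (F : Set Y) := fun p hp => mem_coe.2 (mem_image_of_mem _ (hA hp))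
  set B : Finset (F : Set Y) := A.attach.image fun p => ⟨p.1.2, hmem p.1 p.2⟩
  have hBsnd : B.image Subtype.val = A.image Prod.snd := by
    rw [image_image]
    conv_rhs => rw [← attach_image_val (s := A), image_image]
    rfl
  have hBfst : B.image (fun z => (pick z).1) = A.image Prod.fst := by
    rw [image_image]
    conv_rhs => rw [← attach_image_val (s := A), image_image]
    exact image_congr fun p _ => hS.fst_eq_of_snd_eq (hpickS _) (hA p.2) (hpick _)
  rw [← hBsnd, ← hBfst]
  exact hy B

lemma insert_of_δ_insert_eq {x : X} {y : Y}
    (h : ∀ A ⊆ S, DY.δ (insert y (A.image Prod.snd)) = DX.δ (insert x (A.image Prod.fst))) :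
    IsPartialIso DX DY ↑(insert (x, y) S) := by
  intro A hA
  rw [coe_subset, subset_insert_iff] at hA
  by_cases hxy : (x, y) ∈ A
  · rw [← insert_erase hxy, image_insert, image_insert]
    exact h _ hA
  · rw [erase_eq_of_notMem hxy] at hA
    exact hS A (coe_subset.2 hA)

lemma exists_insert_fst (hYe : DY.ExtensionProp) (x : X) :
    ∃ y, IsPartialIso DX DY ↑(insert (x, y) S) :=
  let ⟨y, hy⟩ := hS.exists_δ_insert_eq hYe x
  ⟨y, hS.insert_of_δ_insert_eq hy⟩

lemma exists_insert_snd (hXe : DX.ExtensionProp) (y : Y) :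
    ∃ x, IsPartialIso DX DY ↑(insert (x, y) S) := by
  obtain ⟨x, hx⟩ := hS.image_swap.exists_insert_fst hXe y
  refine ⟨x, ?_⟩
  simpa [image_insert, image_image, Prod.swap_swap_eq] using hx.image_swap

end IsPartialIso

theorem exists_isPartialIso_covering (hXe : DX.ExtensionProp) (hYe : DY.ExtensionProp)
    {sX : Set X} {sY : Set Y} (hsX : sX.Countable) (hsY : sY.Countable) :
    ∃ R, IsPartialIso DX DY R ∧ sX ⊆ Prod.fst '' R ∧ sY ⊆ Prod.snd '' R := by
  have := hsX.to_subtype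
  have := hsY.to_subtype
  let := Encodable.ofCountable (sX ⊕ sY)
  let P := {S : Finset (X × Y) // IsPartialIso DX DY ↑S}
  let cofinal : sX ⊕ sY → Order.Cofinal P
    | .inl x => ⟨{S | x.1 ∈ S.1.image Prod.fst}, fun S => by
        obtain ⟨y, hy⟩ := S.2.exists_insert_fst hYe x
        exact ⟨⟨_, hy⟩, by simp, subset_insert _ _⟩⟩
    | .inr y => ⟨{S | y.1 ∈ S.1.image Prod.snd}, fun S => by
        obtain ⟨x, hx⟩ := S.2.exists_insert_snd hXe y
        exact ⟨⟨_, hx⟩, by simp, subset_insert _ _⟩⟩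
  let seq := Order.sequenceOfCofinals (⟨∅, by simpa using isPartialIso_empty⟩ : P) cofinal
  have hmono : Monotone fun n => ((seq n).1 : Set (X × Y)) :=
    fun m n hmn => coe_subset.2 (Order.sequenceOfCofinals.monotone _ cofinal hmn :)
  refine ⟨⋃ n, ((seq n).1 : Set (X × Y)),
    isPartialIso_iUnion hmono.directed_le fun n => (seq n).2, fun x hx => ?_, fun y hy => ?_⟩
  · obtain ⟨p, hp, rfl⟩ :=
      mem_image.1 (Order.sequenceOfCofinals.encode_mem _ cofinal (.inl ⟨x, hx⟩))
    exact ⟨p, Set.mem_iUnion.2 ⟨_, hp⟩, rfl⟩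
  · obtain ⟨p, hp, rfl⟩ :=
      mem_image.1 (Order.sequenceOfCofinals.encode_mem _ cofinal (.inr ⟨y, hy⟩))
    exact ⟨p, Set.mem_iUnion.2 ⟨_, hp⟩, rfl⟩

end PartialIso

section Completion

variable {DX : Diversity X} {DY : Diversity Y}

def DenseRange (D : Diversity X) (a : ι → X) : Prop :=
  ∀ x, ∀ ε > 0, ∃ i, D.δ {x, a i} < ε

lemma denseRange_of_subset_range {D : Diversity X} {s : Set X}
    (hs : ∀ x, ∀ ε > 0, ∃ y ∈ s, D.δ {x, y} < ε) {a : ι → X}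
    (ha : s ⊆ Set.range a) :
    D.DenseRange a := fun x ε hε => by
  obtain ⟨_, hy, hxy⟩ := hs x ε hε
  obtain ⟨i, rfl⟩ := ha hy
  exact ⟨i, hxy⟩

variable {a : ι → X} {b : ι → Y}

lemma exists_δ_pair_le (hYc : DY.CompleteD) (hab : ∀ i j, DY.δ {b i, b j} = DX.δ {a i, a j})
    (ha : DX.DenseRange a) (x : X) : ∃ y, ∀ i, DY.δ {y, b i} ≤ DX.δ {x, a i} := by
  choose i hi using fun k : ℕ => ha x (1 / (k + 1)) Nat.one_div_pos_of_nat
  have hclose : ∀ ε > 0, ∃ N, ∀ n ≥ N, DX.δ {x, a (i n)} < ε := by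
    intro ε hε
    obtain ⟨N, hN⟩ := exists_nat_one_div_lt hε
    exact ⟨N, fun n hn => (hi n).trans_le ((Nat.one_div_le_one_div hn).trans hN.le)⟩
  have hcauchy : ∀ ε > 0, ∃ N, ∀ m ≥ N, ∀ n ≥ N, DY.δ {b (i m), b (i n)} < ε := by
    intro ε hε
    obtain ⟨N, hN⟩ := hclose (ε / 2) (half_pos hε)
    refine ⟨N, fun m hm n hn => ?_⟩
    calc DY.δ {b (i m), b (i n)} = DX.δ {a (i m), a (i n)} := hab _ _
      _ ≤ DX.δ {a (i m), x} + DX.δ {x, a (i n)} := DX.δ_pair_triangle _ _ _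
      _ < ε / 2 + ε / 2 := by
        rw [pair_comm (a (i m))]
        exact add_lt_add (hN m hm) (hN n hn)
      _ = ε := add_halves ε
  obtain ⟨y, hy⟩ := hYc _ hcauchy
  refine ⟨y, fun j => le_of_forall_pos_lt_add fun ε hε => ?_⟩
  obtain ⟨N₁, hN₁⟩ := hy (ε / 2) (half_pos hε)
  obtain ⟨N₂, hN₂⟩ := hclose (ε / 2) (half_pos hε)
  have h₁ := hN₁ (max N₁ N₂) (le_max_left _ _)
  have h₂ := hN₂ (max N₁ N₂) (le_max_right _ _)
  set n := max N₁ N₂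
  calc DY.δ {y, b j} ≤ DY.δ {y, b (i n)} + DY.δ {b (i n), b j} := DY.δ_pair_triangle _ _ _
    _ = DY.δ {b (i n), y} + DX.δ {a (i n), a j} := by rw [pair_comm y, hab]
    _ ≤ DY.δ {b (i n), y} + (DX.δ {a (i n), x} + DX.δ {x, a j}) := by
      gcongr
      exact DX.δ_pair_triangle _ _ _
    _ < DX.δ {x, a j} + ε := by
      rw [pair_comm (a (i n))]
      linarith

lemma δ_image_eq_of_δ_pair_le (hab : ∀ A : Finset ι, DY.δ (A.image b) = DX.δ (A.image a))
    (ha : DX.DenseRange a) {φ : X → Y} (hφ : ∀ x i, DY.δ {φ x, b i} ≤ DX.δ {x, a i})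
    (A : Finset X) : DY.δ (A.image φ) = DX.δ A := by
  refine eq_of_forall_abs_sub_le_mul (c := 2 * A.card) fun ε hε => ?_
  choose i hi using fun x => ha x ε hε
  have hY := DY.abs_δ_image_sub_le φ (b ∘ i) (A := A) fun x _ => (hφ x (i x)).trans (hi x).le
  have hX := DX.abs_δ_image_sub_le (a ∘ i) id (A := A) fun x _ => by
    rw [pair_comm]
    exact (hi x).le
  have hmid : DY.δ (A.image (b ∘ i)) = DX.δ (A.image (a ∘ i)) := by
    simpa only [image_image] using hab (A.image i)
  rw [image_id] at hX
  calc |DY.δ (A.image φ) - DX.δ A|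
      ≤ |DY.δ (A.image φ) - DY.δ (A.image (b ∘ i))|
        + |DX.δ (A.image (a ∘ i)) - DX.δ A| := by
        rw [hmid]
        exact abs_sub_le _ _ _
    _ ≤ A.card * ε + A.card * ε := add_le_add hY hX
    _ = 2 * A.card * ε := by ring

lemma injective_of_δ_image_eq {φ : X → Y} (h : ∀ A : Finset X, DY.δ (A.image φ) = DX.δ A) :
    Function.Injective φ := by
  intro x x' hxx'
  rw [← DX.δ_pair_eq_zero_iff, ← h, image_insert, image_singleton, hxx',
    DY.δ_pair_eq_zero_iff]

lemma leftInverse_of_δ_pair_le (hb : DY.DenseRange b) {φ : X → Y} {ψ : Y → X}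
    (hφ : ∀ x i, DY.δ {φ x, b i} ≤ DX.δ {x, a i})
    (hψ : ∀ y i, DX.δ {ψ y, a i} ≤ DY.δ {y, b i}) :
    Function.LeftInverse φ ψ := by
  intro y
  rw [← DY.δ_pair_eq_zero_iff]
  refine le_antisymm (le_of_forall_pos_le_add fun ε hε => ?_) (DY.nonneg _)
  obtain ⟨i, hi⟩ := hb y (ε / 2) (half_pos hε)
  calc DY.δ {φ (ψ y), y} ≤ DY.δ {φ (ψ y), b i} + DY.δ {b i, y} := DY.δ_pair_triangle _ _ _
    _ ≤ DY.δ {y, b i} + DY.δ {y, b i} := by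
      rw [pair_comm (b i)]
      gcongr
      exact (hφ _ i).trans (hψ y i)
    _ ≤ 0 + ε := by linarith

end Completion

end Diversity

/-- Any two Polish diversities with the extension property are isomorphic. -/
theorem stmt10 {X Y : Type*} (DX : Diversity X) (DY : Diversity Y)
    (hXs : DX.SeparableD) (hXc : DX.CompleteD)
    (hYs : DY.SeparableD) (hYc : DY.CompleteD)
    (hXe : DX.ExtensionProp) (hYe : DY.ExtensionProp) :
    ∃ φ : X → Y, Function.Bijective φ ∧ ∀ A : Finset X, DY.δ (A.image φ) = DX.δ A := by
  obtain ⟨sX, hsX, hdX⟩ := hXs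
  obtain ⟨sY, hsY, hdY⟩ := hYs
  obtain ⟨R, hR, hRX, hRY⟩ := Diversity.exists_isPartialIso_covering hXe hYe hsX hsY
  have ha : DX.DenseRange fun p : R => p.1.1 :=
    Diversity.denseRange_of_subset_range hdX (by rwa [← Set.image_eq_range])
  have hb : DY.DenseRange fun p : R => p.1.2 :=
    Diversity.denseRange_of_subset_range hdY (by rwa [← Set.image_eq_range])
  choose φ hφ using Diversity.exists_δ_pair_le hYc (fun p q => hR.δ_pair p.2 q.2) ha
  choose ψ hψ using Diversity.exists_δ_pair_le hXc (fun p q => (hR.δ_pair p.2 q.2).symm) hb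
  have hφδ := Diversity.δ_image_eq_of_δ_pair_le hR.δ_image_eq ha hφ
  exact ⟨φ, ⟨Diversity.injective_of_δ_image_eq hφδ,
    (Diversity.leftInverse_of_δ_pair_le hb hφ hψ).surjective⟩, hφδ⟩
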